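/- arXiv:1709.09444 — 2 statements merged into one kernel-verified Lean document; each statement's English description precedes it below -/
import Mathlib

section
/- Let β > 0, α > 1, γ > 0 with β > 2γβ + α − 1, and suppose e_k ≍ k^{−α}, λ_k² ≍ k^{−β}, w_k ≍ k^{−2γβ}. Then there exists C > 0 such that for all n ≥ 1, λ_n^4 ∑_{k=1}^n λ_k^{−2} w_k e_k ≤ C ∑_{k=n+1}^∞ λ_k² w_k e_k. -/
open Finset

/-! With `s = β - 2γβ - α > -1` and `t = s - 2β < -1`, the summands on the left are `≲ k^s`, so
the left side is `≲ n^{-2β} · n^{s+1} = n^{t+1}`. The tail summands are `≳ k^t`, and already its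
first `n` terms, with indices in `(n, 2n]`, contribute `≳ n · (2n)^t ≍ n^{t+1}`. -/

lemma sum_Icc_rpow_le_of_nonneg {s : ℝ} (hs : 0 ≤ s) (n : ℕ) :
    ∑ k ∈ Icc 1 n, (k : ℝ) ^ s ≤ (n : ℝ) ^ (s + 1) :=
  calc ∑ k ∈ Icc 1 n, (k : ℝ) ^ s
      ≤ ∑ _k ∈ Icc 1 n, (n : ℝ) ^ s :=
        sum_le_sum fun k hk => Real.rpow_le_rpow k.cast_nonneg
          (Nat.cast_le.mpr (mem_Icc.mp hk).2) hs
    _ = (n : ℝ) ^ (s + 1) := by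
        rw [sum_const, Nat.card_Icc, Real.rpow_add_one' n.cast_nonneg (by linarith)]
        simp [mul_comm]

lemma sum_Icc_rpow_le_of_nonpos {s : ℝ} (hs : -1 < s) (hs₀ : s ≤ 0) {n : ℕ} (hn : 1 ≤ n) :
    ∑ k ∈ Icc 1 n, (k : ℝ) ^ s ≤ (n : ℝ) ^ (s + 1) / (s + 1) := by
  have hcomp : ∑ i ∈ Ico 1 n, ((i + 1 : ℕ) : ℝ) ^ s ≤ ∫ x in (1 : ℕ)..(n : ℕ), x ^ s :=
    AntitoneOn.sum_le_integral_Ico hn <| (Real.antitoneOn_rpow_Ioi_of_exponent_nonpos hs₀).mono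
      fun x hx => lt_of_lt_of_le one_pos (by exact_mod_cast hx.1)
  rw [integral_rpow (Or.inl hs), Nat.cast_one, Real.one_rpow] at hcomp
  have hsplit : ∑ k ∈ Icc 1 n, (k : ℝ) ^ s = 1 + ∑ i ∈ Ico 1 n, ((i + 1 : ℕ) : ℝ) ^ s := by
    rw [← Ico_add_one_right_eq_Icc, sum_eq_sum_Ico_succ_bot (by omega),
      sum_Ico_add' (fun k : ℕ => (k : ℝ) ^ s) 1 n 1]
    simp
  rw [hsplit, le_div_iff₀ (by linarith)]
  rw [le_div_iff₀ (by linarith)] at hcomp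
  nlinarith

lemma exists_sum_Icc_rpow_le {s : ℝ} (hs : -1 < s) :
    ∃ C > 0, ∀ n : ℕ, 1 ≤ n → ∑ k ∈ Icc 1 n, (k : ℝ) ^ s ≤ C * (n : ℝ) ^ (s + 1) := by
  rcases le_total 0 s with hs₀ | hs₀
  · exact ⟨1, one_pos, fun n _ => by simpa using sum_Icc_rpow_le_of_nonneg hs₀ n⟩
  · refine ⟨(s + 1)⁻¹, inv_pos.mpr (by linarith), fun n hn => ?_⟩
    rw [← div_eq_inv_mul]
    exact sum_Icc_rpow_le_of_nonpos hs hs₀ hn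

lemma exists_sum_Icc_le_rpow {a : ℕ → ℝ} {A s : ℝ} (hs : -1 < s) (hA : 0 < A)
    (ha : ∀ k, 1 ≤ k → a k ≤ A * (k : ℝ) ^ s) :
    ∃ C > 0, ∀ n : ℕ, 1 ≤ n → ∑ k ∈ Icc 1 n, a k ≤ C * (n : ℝ) ^ (s + 1) := by
  obtain ⟨C, hC, hsum⟩ := exists_sum_Icc_rpow_le hs
  refine ⟨A * C, mul_pos hA hC, fun n hn => ?_⟩
  calc ∑ k ∈ Icc 1 n, a k
      ≤ ∑ k ∈ Icc 1 n, A * (k : ℝ) ^ s := sum_le_sum fun k hk => ha k (mem_Icc.mp hk).1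
    _ = A * ∑ k ∈ Icc 1 n, (k : ℝ) ^ s := (mul_sum _ _ _).symm
    _ ≤ A * C * (n : ℝ) ^ (s + 1) := by
        rw [mul_assoc]; exact mul_le_mul_of_nonneg_left (hsum n hn) hA.le

lemma summable_of_le_rpow {b : ℕ → ℝ} {B t : ℝ} (ht : t < -1)
    (hb₀ : ∀ k, 1 ≤ k → 0 ≤ b k) (hb : ∀ k, 1 ≤ k → b k ≤ B * (k : ℝ) ^ t) : Summable b := by
  have hdom : Summable fun k : ℕ => B * ((k + 1 : ℕ) : ℝ) ^ t :=
    ((summable_nat_add_iff 1).mpr (Real.summable_nat_rpow.mpr ht)).mul_left B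
  exact (summable_nat_add_iff 1).mp <|
    hdom.of_nonneg_of_le (fun k => hb₀ _ k.succ_pos) fun k => hb _ k.succ_pos

lemma exists_rpow_le_tsum_nat_add {b : ℕ → ℝ} {B t : ℝ} (ht : t ≤ 0) (hB : 0 < B)
    (hb : Summable b) (hlow : ∀ k : ℕ, 1 ≤ k → B * (k : ℝ) ^ t ≤ b k) :
    ∃ c > 0, ∀ n : ℕ, 1 ≤ n → c * (n : ℝ) ^ (t + 1) ≤ ∑' k, b (n + 1 + k) := by
  refine ⟨B * 2 ^ t, by positivity, fun n hn => ?_⟩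
  have hn₀ : (0 : ℝ) < n := by exact_mod_cast hn
  have hb₀ : ∀ k, 0 ≤ b (n + 1 + k) := fun k =>
    (by positivity : 0 ≤ B * ((n + 1 + k : ℕ) : ℝ) ^ t).trans (hlow _ (by omega))
  have hterm : ∀ k ∈ range n, B * (2 * n : ℝ) ^ t ≤ b (n + 1 + k) := fun k hk => by
    have hidx : ((n + 1 + k : ℕ) : ℝ) ≤ 2 * n := by
      have : n + 1 + k ≤ 2 * n := by have := mem_range.mp hk; omega
      exact_mod_cast this
    exact (mul_le_mul_of_nonneg_left (Real.rpow_le_rpow_of_nonpos (by positivity) hidx ht)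
      hB.le).trans (hlow _ (by omega))
  calc B * 2 ^ t * (n : ℝ) ^ (t + 1)
      = ∑ _k ∈ range n, B * (2 * n : ℝ) ^ t := by
        rw [sum_const, card_range, nsmul_eq_mul, Real.mul_rpow zero_le_two hn₀.le,
          Real.rpow_add_one hn₀.ne']
        ring
    _ ≤ ∑ k ∈ range n, b (n + 1 + k) := sum_le_sum hterm
    _ ≤ ∑' k, b (n + 1 + k) :=
        (hb.comp_injective (add_right_injective (n + 1))).sum_le_tsum _ fun k _ => hb₀ k

section PowerBounds

variable {x a b A B p q : ℝ}

lemma mul_le_mul_rpow_add (hx : 0 < x) (ha : 0 ≤ a) (hb : 0 ≤ b) (hax : a ≤ A * x ^ p)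
    (hbx : b ≤ B * x ^ q) : a * b ≤ A * B * x ^ (p + q) :=
  calc a * b ≤ A * x ^ p * (B * x ^ q) := mul_le_mul hax hbx hb (ha.trans hax)
    _ = A * B * x ^ (p + q) := by rw [Real.rpow_add hx]; ring

lemma mul_rpow_add_le_mul (hx : 0 < x) (hA : 0 ≤ A) (hB : 0 ≤ B) (hax : A * x ^ p ≤ a)
    (hbx : B * x ^ q ≤ b) : A * B * x ^ (p + q) ≤ a * b :=
  calc A * B * x ^ (p + q) = A * x ^ p * (B * x ^ q) := by rw [Real.rpow_add hx]; ring
    _ ≤ a * b := mul_le_mul hax hbx (by positivity) ((by positivity : 0 ≤ A * x ^ p).trans hax)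

lemma inv_le_inv_mul_rpow (hx : 0 < x) (hA : 0 < A) (hax : A * x ^ (-p) ≤ a) :
    a⁻¹ ≤ A⁻¹ * x ^ p :=
  calc a⁻¹ ≤ (A * x ^ (-p))⁻¹ := inv_anti₀ (by positivity) hax
    _ = A⁻¹ * x ^ p := by rw [mul_inv, Real.rpow_neg hx.le, inv_inv]

end PowerBounds

lemma exists_mul_sum_Icc_le_mul_tsum {μ a b : ℕ → ℝ} {M A B B' q s t : ℝ} (hs : -1 < s)
    (ht : t < -1) (hqst : q + s = t) (hM : 0 < M) (hA : 0 < A) (hB : 0 < B)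
    (hμ : ∀ n : ℕ, 1 ≤ n → μ n ≤ M * (n : ℝ) ^ q)
    (ha₀ : ∀ k, 1 ≤ k → 0 ≤ a k) (ha : ∀ k, 1 ≤ k → a k ≤ A * (k : ℝ) ^ s)
    (hb_lower : ∀ k : ℕ, 1 ≤ k → B * (k : ℝ) ^ t ≤ b k)
    (hb_upper : ∀ k, 1 ≤ k → b k ≤ B' * (k : ℝ) ^ t) :
    ∃ C > 0, ∀ n : ℕ, 1 ≤ n → μ n * ∑ k ∈ Icc 1 n, a k ≤ C * ∑' k, b (n + 1 + k) := by
  obtain ⟨C, hC, hsum⟩ := exists_sum_Icc_le_rpow hs hA ha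
  have hb : Summable b := summable_of_le_rpow ht
    (fun k hk => (by positivity : 0 ≤ B * (k : ℝ) ^ t).trans (hb_lower k hk)) hb_upper
  obtain ⟨c, hc, htail⟩ := exists_rpow_le_tsum_nat_add (by linarith) hB hb hb_lower
  refine ⟨M * C / c, by positivity, fun n hn => ?_⟩
  have hn₀ : (0 : ℝ) < n := by exact_mod_cast hn
  calc μ n * ∑ k ∈ Icc 1 n, a k
      ≤ M * (n : ℝ) ^ q * (C * (n : ℝ) ^ (s + 1)) :=
        mul_le_mul (hμ n hn) (hsum n hn) (sum_nonneg fun k hk => ha₀ k (mem_Icc.mp hk).1)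
          (by positivity)
    _ = M * C / c * (c * (n : ℝ) ^ (t + 1)) := by
        rw [← hqst, add_assoc, Real.rpow_add hn₀ q (s + 1)]
        field_simp
    _ ≤ M * C / c * ∑' k, b (n + 1 + k) := mul_le_mul_of_nonneg_left (htail n hn) (by positivity)

theorem stmt_5_general
    (α β γ : ℝ) (hβ : 0 < β) (hα : 1 < α) (hγ : 0 < γ) (hβγα : 2 * γ * β + α - 1 < β)
    (e lam w : ℕ → ℝ)
    (c₁ c₂ : ℝ) (hc₁ : 0 < c₁) (hc₂ : 0 < c₂)
    (he : ∀ k : ℕ, 1 ≤ k → c₁ * (k : ℝ) ^ (-α) ≤ e k ∧ e k ≤ c₂ * (k : ℝ) ^ (-α))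
    (d₁ d₂ : ℝ) (hd₁ : 0 < d₁) (hd₂ : 0 < d₂)
    (hlam : ∀ k : ℕ, 1 ≤ k → d₁ * (k : ℝ) ^ (-β) ≤ (lam k) ^ 2 ∧ (lam k) ^ 2 ≤ d₂ * (k : ℝ) ^ (-β))
    (b₁ b₂ : ℝ) (hb₁ : 0 < b₁) (hb₂ : 0 < b₂)
    (hw : ∀ k : ℕ, 1 ≤ k → b₁ * (k : ℝ) ^ (-(2 * γ * β)) ≤ w k ∧ w k ≤ b₂ * (k : ℝ) ^ (-(2 * γ * β))) :
    ∃ C > 0, ∀ n, 1 ≤ n →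
      (lam n) ^ 4 * ∑ k ∈ Icc 1 n, ((lam k) ^ 2)⁻¹ * w k * e k
        ≤ C * ∑' k : ℕ, (lam (n + 1 + k)) ^ 2 * w (n + 1 + k) * e (n + 1 + k) := by
  have hk₀ : ∀ k : ℕ, 1 ≤ k → (0 : ℝ) < k := fun k hk => by exact_mod_cast hk
  have hw₀ : ∀ k : ℕ, 1 ≤ k → 0 ≤ w k := fun k hk =>
    (by positivity : 0 ≤ b₁ * (k : ℝ) ^ (-(2 * γ * β))).trans (hw k hk).1
  have he₀ : ∀ k : ℕ, 1 ≤ k → 0 ≤ e k := fun k hk =>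
    (by positivity : 0 ≤ c₁ * (k : ℝ) ^ (-α)).trans (he k hk).1
  refine exists_mul_sum_Icc_le_mul_tsum (μ := fun n => (lam n) ^ 4)
    (a := fun k => ((lam k) ^ 2)⁻¹ * w k * e k) (b := fun k => (lam k) ^ 2 * w k * e k)
    (q := -β + -β) (M := d₂ * d₂) (A := d₁⁻¹ * b₂ * c₂) (B := d₁ * b₁ * c₁)
    (B' := d₂ * b₂ * c₂) (by linarith : -1 < β + -(2 * γ * β) + -α)
    (by nlinarith : -β + -(2 * γ * β) + -α < -1) (by ring) (by positivity) (by positivity)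
    (by positivity) (fun n hn => ?_) (fun k hk => ?_) (fun k hk => ?_) (fun k hk => ?_)
    (fun k hk => ?_)
  · rw [show (lam n) ^ 4 = (lam n) ^ 2 * (lam n) ^ 2 by ring]
    exact mul_le_mul_rpow_add (hk₀ n hn) (sq_nonneg _) (sq_nonneg _) (hlam n hn).2 (hlam n hn).2
  · have := hw₀ k hk; have := he₀ k hk; positivity
  · exact mul_le_mul_rpow_add (hk₀ k hk) (by have := hw₀ k hk; positivity) (he₀ k hk)
      (mul_le_mul_rpow_add (hk₀ k hk) (by positivity) (hw₀ k hk)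
        (inv_le_inv_mul_rpow (hk₀ k hk) hd₁ (hlam k hk).1) (hw k hk).2) (he k hk).2
  · exact mul_rpow_add_le_mul (hk₀ k hk) (by positivity) hc₁.le
      (mul_rpow_add_le_mul (hk₀ k hk) hd₁.le hb₁.le (hlam k hk).1 (hw k hk).1) (he k hk).1
  · exact mul_le_mul_rpow_add (hk₀ k hk) (by have := hw₀ k hk; positivity) (he₀ k hk)
      (mul_le_mul_rpow_add (hk₀ k hk) (by positivity) (hw₀ k hk) (hlam k hk).2 (hw k hk).2)
      (he k hk).2

/-- Mildly ill-posed case with Hölder-type weights: if `e k ≍ k^{-α}`, `lam k ^ 2 ≍ k^{-β}`,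
`w k ≍ k^{-2γβ}` with `α > 1`, `γ > 0`, `β > 2γβ + α - 1`, then the κ-weighted
Muckenhoupt-type noise condition holds. -/
theorem stmt_5
    (α β γ : ℝ) (hβ : 0 < β) (hα : 1 < α) (hγ : 0 < γ) (hβγα : 2 * γ * β + α - 1 < β)
    (e lam w : ℕ → ℝ)
    (c₁ c₂ : ℝ) (hc₁ : 0 < c₁) (hc₂ : 0 < c₂)
    (he : ∀ k : ℕ, 1 ≤ k → c₁ * (k : ℝ) ^ (-α) ≤ e k ∧ e k ≤ c₂ * (k : ℝ) ^ (-α))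
    (d₁ d₂ : ℝ) (hd₁ : 0 < d₁) (hd₂ : 0 < d₂)
    (hlam : ∀ k : ℕ, 1 ≤ k → d₁ * (k : ℝ) ^ (-β) ≤ (lam k) ^ 2 ∧ (lam k) ^ 2 ≤ d₂ * (k : ℝ) ^ (-β))
    (hlam_pos : ∀ k, 0 < lam k)
    (b₁ b₂ : ℝ) (hb₁ : 0 < b₁) (hb₂ : 0 < b₂)
    (hw : ∀ k : ℕ, 1 ≤ k → b₁ * (k : ℝ) ^ (-(2 * γ * β)) ≤ w k ∧ w k ≤ b₂ * (k : ℝ) ^ (-(2 * γ * β))) :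
    ∃ C > 0, ∀ n, 1 ≤ n →
      (lam n) ^ 4 * ∑ k ∈ Icc 1 n, ((lam k) ^ 2)⁻¹ * w k * e k
        ≤ C * ∑' k : ℕ, (lam (n + 1 + k)) ^ 2 * w (n + 1 + k) * e (n + 1 + k) :=
  stmt_5_general α β γ hβ hα hγ hβγα e lam w c₁ c₂ hc₁ hc₂ he d₁ d₂ hd₁ hd₂ hlam b₁ b₂ hb₁ hb₂ hw
end

section
/- Let a ∈ (0,1) and let (ξ_k) be a sequence of independent random variables with sup_k E[ξ_k²] < ∞ and limsup_{k→∞} |ξ_k| = +∞ almost surely. Then with probability 1, sup_{n ≥ 1} [ a^{2n} ∑_{k=1}^n a^{−k} k^{−α} ξ_k² ] / [ ∑_{k=n+1}^∞ a^k k^{−α} ξ_k² ] = +∞, for any α > 1. -/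
/-!
The numerator of the ratio at index `n` is at least `a^n n^{-α} ξ_n²`, and its denominator is at
most `a^n n^{-α} V_n` with `V_n = ∑_{k ≥ 0} a^{k+1} ξ_{n+1+k}²`, whose expectation is bounded
uniformly in `n`. So it suffices that `C V_n < ξ_n²` for some `n ≥ 1`. Let `E_n` be the event that
`n ≥ 1` is the first index with `|ξ_n| > M`: the `E_n` are disjoint, almost surely one of them
occurs, and `E_n` is independent of `V_n`. By Markov's inequality the probability that
`C V_n ≥ M²` on the `E_n` that occurs is at most `C sup_n 𝔼 V_n / M²`, which tends to `0`.
-/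

open MeasureTheory ProbabilityTheory Finset Filter

open scoped ENNReal Topology

section FirstPassage

variable {Ω : Type*} {m0 : MeasurableSpace Ω} {μ : Measure Ω} [IsProbabilityMeasure μ]

theorem measure_exists_mem_and_forall_mem_imp_le {ℱ 𝒢 : ℕ → MeasurableSpace Ω}
    (hℱ : Monotone ℱ) (hℱle : ∀ n, ℱ n ≤ m0) (hindep : ∀ n, Indep (ℱ n) (𝒢 n) μ)
    {A F : ℕ → Set Ω} (hA : ∀ n, MeasurableSet[ℱ n] (A n)) (hF : ∀ n, MeasurableSet[𝒢 n] (F n))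
    {c : ℝ≥0∞} (hc : ∀ n, μ (F n) ≤ c) :
    μ {ω | (∃ n, ω ∈ A n) ∧ ∀ n, ω ∈ A n → ω ∈ F n} ≤ c := by
  have hD : ∀ n, MeasurableSet[ℱ n] (disjointed A n) := fun n => by
    rw [disjointed_eq_inter_compl]
    exact (hA n).inter <|
      .biInter (Set.to_countable _) fun j hj => (hℱ (le_of_lt hj) _ (hA j)).compl
  have hsub : {ω | (∃ n, ω ∈ A n) ∧ ∀ n, ω ∈ A n → ω ∈ F n} ⊆ ⋃ n, disjointed A n ∩ F n := by
    rintro ω ⟨hex, hall⟩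
    have hω : ω ∈ ⋃ n, disjointed A n := by rw [iUnion_disjointed]; exact Set.mem_iUnion.2 hex
    obtain ⟨n, hn⟩ := Set.mem_iUnion.1 hω
    exact Set.mem_iUnion.2 ⟨n, hn, hall n (disjointed_subset A n hn)⟩
  calc μ _ ≤ μ (⋃ n, disjointed A n ∩ F n) := measure_mono hsub
    _ ≤ ∑' n, μ (disjointed A n ∩ F n) := measure_iUnion_le _
    _ = ∑' n, μ (disjointed A n) * μ (F n) :=
      tsum_congr fun n => (Indep_iff _ _ _).1 (hindep n) _ _ (hD n) (hF n)
    _ ≤ ∑' n, μ (disjointed A n) * c := ENNReal.tsum_le_tsum fun n => by gcongr; exact hc n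
    _ = μ (⋃ n, disjointed A n) * c := by
      rw [ENNReal.tsum_mul_right, measure_iUnion (disjoint_disjointed A) fun n => hℱle n _ (hD n)]
    _ ≤ c := mul_le_of_le_one_left' prob_le_one

end FirstPassage

/-- Valued in `ℝ≥0∞` so that it is meaningful without a summability hypothesis. -/
noncomputable def weightedTail (a : ℝ) (x : ℕ → ℝ) (n : ℕ) : ℝ≥0∞ :=
  ∑' k, ENNReal.ofReal (a ^ (1 + k) * x (n + 1 + k) ^ 2)

section Deterministic

variable {a α : ℝ} {x : ℕ → ℝ} {n : ℕ}

lemma tsum_tail_le_pow_mul_tsum (ha : 0 ≤ a) (hα : 0 ≤ α) (hn : 0 < n)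
    (hsum : Summable fun k => a ^ (1 + k) * x (n + 1 + k) ^ 2) :
    ∑' k, a ^ (n + 1 + k) * ((n + 1 + k : ℕ) : ℝ) ^ (-α) * x (n + 1 + k) ^ 2
      ≤ a ^ n * (n : ℝ) ^ (-α) * ∑' k, a ^ (1 + k) * x (n + 1 + k) ^ 2 := by
  have hterm : ∀ k, a ^ (n + 1 + k) * ((n + 1 + k : ℕ) : ℝ) ^ (-α) * x (n + 1 + k) ^ 2
      ≤ a ^ n * (n : ℝ) ^ (-α) * (a ^ (1 + k) * x (n + 1 + k) ^ 2) := fun k => by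
    have hdecay : ((n + 1 + k : ℕ) : ℝ) ^ (-α) ≤ (n : ℝ) ^ (-α) :=
      Real.rpow_le_rpow_of_nonpos (by exact_mod_cast hn) (by norm_cast; omega) (by linarith)
    calc a ^ (n + 1 + k) * ((n + 1 + k : ℕ) : ℝ) ^ (-α) * x (n + 1 + k) ^ 2
        = a ^ n * ((n + 1 + k : ℕ) : ℝ) ^ (-α) * (a ^ (1 + k) * x (n + 1 + k) ^ 2) := by
          rw [add_assoc, pow_add]; ring
      _ ≤ _ := by gcongr
  rw [← tsum_mul_left]
  exact Summable.tsum_le_tsum hterm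
    (.of_nonneg_of_le (fun k => by positivity) hterm (hsum.mul_left _)) (hsum.mul_left _)

lemma pow_mul_sq_le_pow_mul_sum_Icc (ha : 0 < a) (hn : 1 ≤ n) :
    a ^ n * (n : ℝ) ^ (-α) * x n ^ 2
      ≤ a ^ (2 * n) * ∑ k ∈ Icc 1 n, (a ^ k)⁻¹ * (k : ℝ) ^ (-α) * x k ^ 2 := by
  calc a ^ n * (n : ℝ) ^ (-α) * x n ^ 2 = a ^ (2 * n) * ((a ^ n)⁻¹ * (n : ℝ) ^ (-α) * x n ^ 2) := by
        rw [two_mul, pow_add]; field_simp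
    _ ≤ _ := by
      gcongr
      exact single_le_sum (f := fun k : ℕ => (a ^ k)⁻¹ * (k : ℝ) ^ (-α) * x k ^ 2)
        (fun k _ => by positivity) (mem_Icc.2 ⟨hn, le_rfl⟩)

lemma lt_of_mul_weightedTail_lt {C : ℝ} (ha : 0 < a) (hα : 0 ≤ α) (hn : 1 ≤ n) (hC : 0 < C)
    (h : ENNReal.ofReal C * weightedTail a x n < ENNReal.ofReal (x n ^ 2)) :
    C * ∑' k, a ^ (n + 1 + k) * ((n + 1 + k : ℕ) : ℝ) ^ (-α) * x (n + 1 + k) ^ 2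
      < a ^ (2 * n) * ∑ k ∈ Icc 1 n, (a ^ k)⁻¹ * (k : ℝ) ^ (-α) * x k ^ 2 := by
  have hf : ∀ k, 0 ≤ a ^ (1 + k) * x (n + 1 + k) ^ 2 := fun k => by positivity
  have hfin : weightedTail a x n ≠ ⊤ := fun htop => by
    simp [htop, ENNReal.mul_top, hC] at h
  have hsum : Summable fun k => a ^ (1 + k) * x (n + 1 + k) ^ 2 :=
    (ENNReal.summable_toReal hfin).congr fun k => ENNReal.toReal_ofReal (hf k)
  have hV : C * ∑' k, a ^ (1 + k) * x (n + 1 + k) ^ 2 < x n ^ 2 := by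
    rw [weightedTail, ← ENNReal.ofReal_tsum_of_nonneg hf hsum, ← ENNReal.ofReal_mul hC.le,
      ENNReal.ofReal_lt_ofReal_iff'] at h
    exact h.1
  calc C * ∑' k, a ^ (n + 1 + k) * ((n + 1 + k : ℕ) : ℝ) ^ (-α) * x (n + 1 + k) ^ 2
      ≤ C * (a ^ n * (n : ℝ) ^ (-α) * ∑' k, a ^ (1 + k) * x (n + 1 + k) ^ 2) := by
        gcongr; exact tsum_tail_le_pow_mul_tsum ha.le hα hn hsum
    _ = a ^ n * (n : ℝ) ^ (-α) * (C * ∑' k, a ^ (1 + k) * x (n + 1 + k) ^ 2) := by ring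
    _ < a ^ n * (n : ℝ) ^ (-α) * x n ^ 2 := by gcongr
    _ ≤ _ := pow_mul_sq_le_pow_mul_sum_Icc ha hn

end Deterministic

lemma measurable_weightedTail {Ω : Type*} {m : MeasurableSpace Ω} {ξ : ℕ → Ω → ℝ} (a : ℝ) (n : ℕ)
    (hξ : ∀ k, Measurable (ξ (n + 1 + k))) :
    Measurable fun ω => weightedTail a (fun k => ξ k ω) n :=
  Measurable.tsum fun k => by fun_prop

section Noise

variable {Ω : Type*} [MeasurableSpace Ω] {μ : Measure Ω} {ξ : ℕ → Ω → ℝ} {a : ℝ}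

lemma lintegral_ofReal_sq_le {f : Ω → ℝ} {B : ℝ} (hf : MemLp f 2 μ)
    (hB : μ[fun ω => f ω ^ 2] ≤ B) : ∫⁻ ω, ENNReal.ofReal (f ω ^ 2) ∂μ ≤ ENNReal.ofReal B := by
  rw [← ofReal_integral_eq_lintegral_ofReal hf.integrable_sq (ae_of_all _ fun _ => sq_nonneg _)]
  exact ENNReal.ofReal_le_ofReal hB

lemma lintegral_weightedTail_le (hmeas : ∀ k, Measurable (ξ k)) (ha : 0 ≤ a) {b : ℝ≥0∞}
    (hb : ∀ k, ∫⁻ ω, ENNReal.ofReal (ξ k ω ^ 2) ∂μ ≤ b) (n : ℕ) :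
    ∫⁻ ω, weightedTail a (fun k => ξ k ω) n ∂μ ≤ (∑' k, ENNReal.ofReal (a ^ (1 + k))) * b := by
  unfold weightedTail
  rw [lintegral_tsum fun k => (by fun_prop : Measurable fun ω =>
      ENNReal.ofReal (a ^ (1 + k) * ξ (n + 1 + k) ω ^ 2)).aemeasurable, ← ENNReal.tsum_mul_right]
  refine ENNReal.tsum_le_tsum fun k => ?_
  simp_rw [ENNReal.ofReal_mul (pow_nonneg ha _)]
  rw [lintegral_const_mul _ (by fun_prop)]
  gcongr
  exact hb _

variable [IsProbabilityMeasure μ]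

lemma measure_not_exists_mul_weightedTail_lt_le (hmeas : ∀ k, Measurable (ξ k))
    (hindep : iIndepFun ξ μ) (ha : 0 ≤ a) {b : ℝ≥0∞}
    (hb : ∀ k, ∫⁻ ω, ENNReal.ofReal (ξ k ω ^ 2) ∂μ ≤ b)
    (hunbdd : ∀ᵐ ω ∂μ, ∀ M : ℝ, ∃ᶠ k in atTop, M < |ξ k ω|) (c : ℝ≥0∞) {M : ℝ} (hM : 0 < M) :
    μ {ω | ¬ ∃ n, 1 ≤ n ∧ c * weightedTail a (fun k => ξ k ω) n < ENNReal.ofReal (ξ n ω ^ 2)}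
      ≤ c * ((∑' k, ENNReal.ofReal (a ^ (1 + k))) * b) / ENNReal.ofReal (M ^ 2) := by
  have hbad :
      {ω | ¬ ∃ n, 1 ≤ n ∧ c * weightedTail a (fun k => ξ k ω) n < ENNReal.ofReal (ξ n ω ^ 2)}
      ≤ᵐ[μ] {ω | (∃ n, ω ∈ {ω | 1 ≤ n ∧ M < |ξ n ω|}) ∧ ∀ n, ω ∈ {ω | 1 ≤ n ∧ M < |ξ n ω|} →
        ω ∈ {ω | ENNReal.ofReal (M ^ 2) ≤ c * weightedTail a (fun k => ξ k ω) n}} := by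
    filter_upwards [hunbdd] with ω hω hnot
    simp only [not_exists, not_and, not_lt] at hnot ⊢
    obtain ⟨n, hn, hMn⟩ := frequently_atTop.1 (hω M) 1
    refine ⟨⟨n, hn, hMn⟩, fun n ⟨hn, hMn⟩ => le_trans ?_ (hnot n hn)⟩
    exact ENNReal.ofReal_le_ofReal (by nlinarith [abs_nonneg (ξ n ω), sq_abs (ξ n ω)])
  refine (measure_mono_ae hbad).trans <| measure_exists_mem_and_forall_mem_imp_le
    (ℱ := fun n => ⨆ i ∈ Set.Iic n, MeasurableSpace.comap (ξ i) inferInstance)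
    (𝒢 := fun n => ⨆ i ∈ Set.Ioi n, MeasurableSpace.comap (ξ i) inferInstance)
    (fun i j hij => biSup_mono fun k hk => le_trans hk hij)
    (fun n => iSup₂_le fun i _ => (hmeas i).comap_le)
    (fun n => indep_iSup_of_disjoint (fun i => (hmeas i).comap_le) hindep.iIndep
      (Set.Iic_disjoint_Ioi le_rfl)) ?_ ?_ ?_
  · exact fun n => (MeasurableSet.const _).inter <| le_iSup₂ (f := fun i (_ : i ∈ Set.Iic n) =>
      MeasurableSpace.comap (ξ i) inferInstance) n Set.self_mem_Iic _
      ⟨{x | M < |x|}, measurableSet_lt measurable_const measurable_abs, rfl⟩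
  · refine fun n => Measurable.const_mul ?_ c measurableSet_Ici
    refine measurable_weightedTail a n fun k => Measurable.of_comap_le ?_
    exact le_iSup₂ (f := fun i (_ : i ∈ Set.Ioi n) => MeasurableSpace.comap (ξ i) inferInstance)
      (n + 1 + k) (by simp only [Set.mem_Ioi]; omega)
  · intro n
    have hV : Measurable fun ω => weightedTail a (fun k => ξ k ω) n :=
      measurable_weightedTail a n fun k => hmeas _
    refine (meas_ge_le_lintegral_div (hV.const_mul c).aemeasurable (by simp [hM.ne'])
      ENNReal.ofReal_ne_top).trans ?_
    rw [lintegral_const_mul c hV]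
    gcongr
    exact lintegral_weightedTail_le hmeas ha hb n

lemma ae_exists_mul_weightedTail_lt (hmeas : ∀ k, Measurable (ξ k)) (hindep : iIndepFun ξ μ)
    (ha : 0 ≤ a) (ha1 : a < 1) {b : ℝ≥0∞} (hb_top : b ≠ ⊤)
    (hb : ∀ k, ∫⁻ ω, ENNReal.ofReal (ξ k ω ^ 2) ∂μ ≤ b)
    (hunbdd : ∀ᵐ ω ∂μ, ∀ M : ℝ, ∃ᶠ k in atTop, M < |ξ k ω|) :
    ∀ᵐ ω ∂μ, ∀ c : ℝ≥0∞, c ≠ ⊤ →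
      ∃ n, 1 ≤ n ∧ c * weightedTail a (fun k => ξ k ω) n < ENNReal.ofReal (ξ n ω ^ 2) := by
  have hgeom : ∑' k, ENNReal.ofReal (a ^ (1 + k)) ≠ ⊤ := by
    simpa only [add_comm 1] using
      ((summable_nat_add_iff 1).2 (summable_geometric_of_lt_one ha ha1)).tsum_ofReal_ne_top
  have hnull : ∀ m : ℕ, ∀ᵐ ω ∂μ,
      ∃ n, 1 ≤ n ∧ (m : ℝ≥0∞) * weightedTail a (fun k => ξ k ω) n < ENNReal.ofReal (ξ n ω ^ 2) := by
    intro m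
    rw [ae_iff, ← nonpos_iff_eq_zero]
    have hlim : Tendsto (fun M : ℝ => (m : ℝ≥0∞) * ((∑' k, ENNReal.ofReal (a ^ (1 + k))) * b) /
        ENNReal.ofReal (M ^ 2)) atTop (𝓝 0) := by
      simpa using ENNReal.Tendsto.const_div
        (ENNReal.tendsto_ofReal_atTop.comp (tendsto_pow_atTop two_ne_zero)) (Or.inr (by finiteness))
    exact ge_of_tendsto hlim <| (eventually_gt_atTop 0).mono fun M hM =>
      measure_not_exists_mul_weightedTail_lt_le hmeas hindep ha hb hunbdd _ hM
  filter_upwards [ae_all_iff.2 hnull] with ω hω c hc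
  obtain ⟨m, hm⟩ := ENNReal.exists_nat_gt hc
  obtain ⟨n, hn, hlt⟩ := hω m
  exact ⟨n, hn, lt_of_le_of_lt (by gcongr) hlt⟩

end Noise

/-- Failure of the Muckenhoupt-type noise condition in the severely ill-posed case, under
independence, uniformly bounded second moments, and a.s. unboundedness of the noise. -/
theorem stmt_7
    {Ω : Type*} [MeasurableSpace Ω] {μ : Measure Ω} [IsProbabilityMeasure μ]
    (a : ℝ) (ha : 0 < a) (ha1 : a < 1)
    (ξ : ℕ → Ω → ℝ)
    (hmeas : ∀ k, Measurable (ξ k))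
    (hindep : iIndepFun ξ μ)
    (hL2 : ∀ k, MemLp (ξ k) 2 μ)
    (B : ℝ) (hB : ∀ k, μ[fun ω => (ξ k ω) ^ 2] ≤ B)
    (hunbdd : ∀ᵐ ω ∂μ, ∀ M : ℝ, ∃ᶠ k in atTop, M < |ξ k ω|) :
    ∀ α : ℝ, 1 < α →
      ∀ᵐ ω ∂μ, ∀ C : ℝ, ∃ n : ℕ, 1 ≤ n ∧
        C * ∑' k : ℕ, a ^ (n + 1 + k) * ((n + 1 + k : ℕ) : ℝ) ^ (-α) * (ξ (n + 1 + k) ω) ^ 2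
          < a ^ (2 * n) * ∑ k ∈ Icc 1 n, (a ^ k)⁻¹ * (k : ℝ) ^ (-α) * (ξ k ω) ^ 2 := by
  intro α hα
  filter_upwards [ae_exists_mul_weightedTail_lt hmeas hindep ha.le ha1 ENNReal.ofReal_ne_top
    (fun k => lintegral_ofReal_sq_le (hL2 k) (hB k)) hunbdd] with ω hω C
  obtain ⟨n, hn, hlt⟩ := hω (ENNReal.ofReal (max C 1)) ENNReal.ofReal_ne_top
  refine ⟨n, hn, lt_of_le_of_lt ?_
    (lt_of_mul_weightedTail_lt ha (by linarith) hn (by positivity) hlt)⟩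
  gcongr
  exact le_max_left C 1
end
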